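/- For every quarter-plane p-tandem word w̄, the word Ψ_p(w̄) is a p-Łukasiewicz word of the same length as w̄. -/

import Mathlib

/-- Words over the alphabet `Σ_p = {-1, 0, 1, …, p}`. -/
def SigmaWord (p : ℕ) (w : List ℤ) : Prop := ∀ a ∈ w, -1 ≤ a ∧ a ≤ (p : ℤ)

/-- A `p`-Łukasiewicz word: a word over `Σ_p` all of whose prefix sums are
nonnegative and whose total sum is `0`. -/
def Lukasiewicz (p : ℕ) (w : List ℤ) : Prop :=
  SigmaWord p w ∧ (∀ i, 0 ≤ (w.take i).sum) ∧ w.sum = 0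

/-- The step set `S_p`: the vectors `(-j, p-j)` for `0 ≤ j ≤ p` together with `(1, -1)`. -/
def InSp (p : ℕ) (s : ℤ × ℤ) : Prop :=
  s = (1, -1) ∨ ∃ j : ℕ, j ≤ p ∧ s = (-(j : ℤ), (p : ℤ) - (j : ℤ))

/-- A quarter-plane `p`-tandem word: a word over `S_p` all of whose prefix sums
have both coordinates nonnegative. -/
def Tandem (p : ℕ) (w : List (ℤ × ℤ)) : Prop :=
  (∀ a ∈ w, InSp p a) ∧ ∀ i, 0 ≤ ((w.take i).sum).1 ∧ 0 ≤ ((w.take i).sum).2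

/-- A word over the alphabet `A_p = { a_{ℓ,m} : ℓ + m ≤ p - 1 }`; letters are
encoded as pairs `(ℓ, m) : ℕ × ℕ`.  The stack `H` is represented with its most
recently appended (rightmost) letter at the *head* of the list. -/
def HValid (p : ℕ) (H : List (ℕ × ℕ)) : Prop := ∀ x ∈ H, x.1 + x.2 + 1 ≤ p

/-- The forward step map `F`: from an input letter `μ ∈ Σ_p` and a counter
`(H, v)`, produce the new counter together with the output letter in `S_p`;
`none` is the error on the forbidden input `(-1, ε, 0)`.  The stack `H` has its
most recently appended letter at the head of the list. -/
def Fstep (p : ℕ) (μ : ℤ) (H : List (ℕ × ℕ)) (v : ℕ) :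
    Option (List (ℕ × ℕ) × ℕ × (ℤ × ℤ)) :=
  if μ = (p : ℤ) then some (H, v + p, ((0 : ℤ), (p : ℤ)))
  else if 0 ≤ μ then
    -- here `0 ≤ μ ≤ p - 1`
    if v = 0 then some (H, μ.toNat, ((0 : ℤ), (p : ℤ)))
    else some ((μ.toNat, 0) :: H, v - 1, ((1 : ℤ), (-1 : ℤ)))
  else
    -- here `μ = -1`
    match H, v with
    | [], 0 => none
    | [], v' + 1 => some ([], v', ((1 : ℤ), (-1 : ℤ)))
    | (l, m) :: H', 0 => some (H', l, (-(m : ℤ) - 1, (p : ℤ) - (m : ℤ) - 1))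
    | (l, m) :: H', v' + 1 =>
      if l + m + 1 = p then
        some (H', (v' + 1) + l, (-(m : ℤ) - 1, (p : ℤ) - (m : ℤ) - 1))
      else some ((l, m + 1) :: H', v', ((1 : ℤ), (-1 : ℤ)))

/-- The left-to-right process: starting from the counter `(H, v)`, process the
letters of the input word in order, returning the final counter together with
the output word, or `none` if an error occurs. -/
def PhiRun (p : ℕ) : List (ℕ × ℕ) → ℕ → List ℤ →
    Option (List (ℕ × ℕ) × ℕ × List (ℤ × ℤ))
  | H, v, [] => some (H, v, [])
  | H, v, μ :: w =>
    match Fstep p μ H v with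
    | none => none
    | some (H', v', a) => (PhiRun p H' v' w).map (fun r => (r.1, r.2.1, a :: r.2.2))

/-- The partial map `Φ_p`: run the left-to-right process from `(ε, 0)` and
return the output word. -/
def Phi (p : ℕ) (w : List ℤ) : Option (List (ℤ × ℤ)) :=
  (PhiRun p [] 0 w).map (fun r => r.2.2)

/-- The backward step map `B`: from a counter `(H, v)` and a letter `ā ∈ S_p`,
produce the input letter `μ ∈ Σ_p` and the previous counter.  The stack `H` has
its most recently appended letter at the head of the list.  (The value on
letters outside `S_p` is irrelevant junk.) -/
def Bstep (p : ℕ) (H : List (ℕ × ℕ)) (v : ℕ) (a : ℤ × ℤ) :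
    ℤ × List (ℕ × ℕ) × ℕ :=
  if a = ((1 : ℤ), (-1 : ℤ)) then
    match H with
    | [] => (-1, [], v + 1)
    | (l, 0) :: H' => ((l : ℤ), H', v + 1)
    | (l, m + 1) :: H' => (-1, (l, m) :: H', v + 1)
  else if a.1 = 0 then
    -- here `a = (0, p)`
    if v ≤ p - 1 then ((v : ℤ), H, 0) else ((p : ℤ), H, v - p)
  else
    -- here `a = (-m - 1, p - m - 1)` with `0 ≤ m ≤ p - 1`
    let m : ℕ := (-a.1 - 1).toNat
    if v ≤ p - m - 1 then (-1, (v, m) :: H, 0)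
    else (-1, (p - m - 1, m) :: H, v - (p - m - 1))

/-- The right-to-left process: starting from the counter `(ε, 0)` at the right
end of the word, process the letters from right to left, returning the counter
at the left end together with the output word. -/
def PsiRun (p : ℕ) : List (ℤ × ℤ) → List (ℕ × ℕ) × ℕ × List ℤ
  | [] => ([], 0, [])
  | a :: rest =>
    let r := PsiRun p rest
    let s := Bstep p r.1 r.2.1 a
    (s.2.1, s.2.2, s.1 :: r.2.2)

/-- The total map `Ψ_p`. -/
def Psi (p : ℕ) (w : List (ℤ × ℤ)) : List ℤ := (PsiRun p w).2.2

/-- The weight `wt_ℓ`, determined on letters by `wt_ℓ(a_{ℓ,m}) = ℓ + 1`. -/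
def wtl (H : List (ℕ × ℕ)) : ℕ := (H.map (fun x => x.1 + 1)).sum

/-- The weight `wt_m`, determined on letters by `wt_m(a_{ℓ,m}) = m + 1`. -/
def wtm (H : List (ℕ × ℕ)) : ℕ := (H.map (fun x => x.2 + 1)).sum


namespace PsiAux

/-- Generalized right-to-left run starting from an arbitrary counter. -/
def Run (p : ℕ) : List (ℤ × ℤ) → List (ℕ × ℕ) → ℕ → List (ℕ × ℕ) × ℕ × List ℤ
  | [], H, v => (H, v, [])
  | a :: rest, H, v =>
    let r := Run p rest H v
    let s := Bstep p r.1 r.2.1 a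
    (s.2.1, s.2.2, s.1 :: r.2.2)

lemma psiRun_eq_run (p : ℕ) (u : List (ℤ × ℤ)) : PsiRun p u = Run p u [] 0 := by
  induction u with
  | nil => rfl
  | cons a rest ih => simp only [PsiRun, Run, ih]

lemma run_append (p : ℕ) (u₁ u₂ : List (ℤ × ℤ)) (H : List (ℕ × ℕ)) (v : ℕ) :
    Run p (u₁ ++ u₂) H v =
      ((Run p u₁ (Run p u₂ H v).1 (Run p u₂ H v).2.1).1,
       (Run p u₁ (Run p u₂ H v).1 (Run p u₂ H v).2.1).2.1,
       (Run p u₁ (Run p u₂ H v).1 (Run p u₂ H v).2.1).2.2 ++ (Run p u₂ H v).2.2) := by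
  induction u₁ with
  | nil => simp [Run]
  | cons a rest ih => simp [Run, ih]

/-- Dip of the first coordinate. -/
def Dx : List (ℤ × ℤ) → ℤ
  | [] => 0
  | a :: u => max 0 (Dx u - a.1)

/-- Dip of the second coordinate. -/
def Dy : List (ℤ × ℤ) → ℤ
  | [] => 0
  | a :: u => max 0 (Dy u - a.2)

lemma dx_nonneg (u : List (ℤ × ℤ)) : 0 ≤ Dx u := by
  cases u <;> simp [Dx]

lemma dy_nonneg (u : List (ℤ × ℤ)) : 0 ≤ Dy u := by
  cases u <;> simp [Dy]

lemma dx_le (u : List (ℤ × ℤ)) (c : ℤ) (h : ∀ i, -c ≤ ((u.take i).sum).1) : Dx u ≤ c := by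
  induction u generalizing c with
  | nil =>
    have h0 : -c ≤ 0 := by simpa using h 0
    simp only [Dx]
    linarith
  | cons a u ih =>
    have h0 : -c ≤ 0 := by simpa using h 0
    have h1 : Dx u ≤ c + a.1 := by
      refine ih _ (fun i => ?_)
      have := h (i + 1)
      simp [List.take_succ_cons, Prod.fst_add] at this
      linarith
    simp only [Dx, max_le_iff]
    constructor <;> linarith

lemma dy_le (u : List (ℤ × ℤ)) (c : ℤ) (h : ∀ i, -c ≤ ((u.take i).sum).2) : Dy u ≤ c := by
  induction u generalizing c with
  | nil =>
    have h0 : -c ≤ 0 := by simpa using h 0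
    simp only [Dy]
    linarith
  | cons a u ih =>
    have h0 : -c ≤ 0 := by simpa using h 0
    have h1 : Dy u ≤ c + a.2 := by
      refine ih _ (fun i => ?_)
      have := h (i + 1)
      simp [List.take_succ_cons, Prod.snd_add] at this
      linarith
    simp only [Dy, max_le_iff]
    constructor <;> linarith

lemma wtm_cons' (x : ℕ × ℕ) (H : List (ℕ × ℕ)) : wtm (x :: H) = x.2 + 1 + wtm H := by
  simp [wtm]

lemma wtm_eq_zero {H : List (ℕ × ℕ)} (h : wtm H = 0) : H = [] := by
  cases H with
  | nil => rfl
  | cons x H' =>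
    rw [wtm_cons'] at h
    omega

lemma wtl_cons (x : ℕ × ℕ) (H : List (ℕ × ℕ)) : wtl (x :: H) = x.1 + 1 + wtl H := by
  simp [wtl]

lemma wtm_cons (x : ℕ × ℕ) (H : List (ℕ × ℕ)) : wtm (x :: H) = x.2 + 1 + wtm H := by
  simp [wtm]

lemma hvalid_cons {p : ℕ} {x : ℕ × ℕ} {H : List (ℕ × ℕ)} (hx : x.1 + x.2 + 1 ≤ p)
    (hH : HValid p H) : HValid p (x :: H) := by
  intro y hy
  rcases List.mem_cons.1 hy with rfl | hy
  · exact hx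
  · exact hH y hy

lemma bstep_spec (p : ℕ) {a : ℤ × ℤ} (ha : InSp p a)
    {H : List (ℕ × ℕ)} (hH : HValid p H) (v : ℕ) :
    HValid p (Bstep p H v a).2.1 ∧
    (-1 ≤ (Bstep p H v a).1 ∧ (Bstep p H v a).1 ≤ (p : ℤ)) ∧
    (Bstep p H v a).1 + ((Bstep p H v a).2.2 : ℤ) + (wtl (Bstep p H v a).2.1 : ℤ)
      = (v : ℤ) + (wtl H : ℤ) ∧
    ((wtm (Bstep p H v a).2.1 : ℤ) ≤ (wtm H : ℤ) - a.1 ∨ wtm (Bstep p H v a).2.1 = 0) ∧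
    (((Bstep p H v a).2.2 : ℤ) ≤ (v : ℤ) - a.2 ∨ (Bstep p H v a).2.2 = 0) := by
  rcases ha with rfl | ⟨j, hj, rfl⟩
  · -- a = (1, -1)
    rcases H with _ | ⟨⟨l, _ | m⟩, H'⟩
    · have heq : Bstep p [] v ((1:ℤ), (-1:ℤ)) = (-1, [], v + 1) := by
        simp [Bstep]
      rw [heq]
      refine ⟨fun x hx => by simp at hx, ⟨le_refl _, by push_cast; omega⟩, ?_, ?_, ?_⟩
      · push_cast; ring
      · right; simp [wtm]
      · left; push_cast; omega
    · have hl : l + 0 + 1 ≤ p := hH (l, 0) (by simp)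
      have hH' : HValid p H' := fun x hx => hH x (by simp [hx])
      have heq : Bstep p ((l, 0) :: H') v ((1:ℤ), (-1:ℤ)) = ((l : ℤ), H', v + 1) := by
        simp [Bstep]
      rw [heq]
      refine ⟨hH', ⟨by push_cast; omega, by push_cast; omega⟩, ?_, ?_, ?_⟩
      · rw [wtl_cons]; push_cast; ring
      · left; rw [wtm_cons]; push_cast; omega
      · left; push_cast; omega
    · have hl : l + (m + 1) + 1 ≤ p := hH (l, m + 1) (by simp)
      have hH' : HValid p ((l, m) :: H') := by
        refine hvalid_cons (by simp; omega) (fun x hx => hH x (by simp [hx]))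
      have heq : Bstep p ((l, m + 1) :: H') v ((1:ℤ), (-1:ℤ))
          = (-1, (l, m) :: H', v + 1) := by
        simp [Bstep]
      rw [heq]
      refine ⟨hH', ⟨le_refl _, by push_cast; omega⟩, ?_, ?_, ?_⟩
      · rw [wtl_cons, wtl_cons]; push_cast; ring
      · left; rw [wtm_cons, wtm_cons]; push_cast; omega
      · left; push_cast; omega
  · -- a = (-j, p - j)
    rcases Nat.eq_zero_or_pos j with rfl | hj1
    · -- a = (0, p)
      have hne : ((-(0:ℕ) : ℤ), (p : ℤ) - ((0:ℕ) : ℤ)) ≠ ((1 : ℤ), (-1 : ℤ)) := by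
        intro h
        exact absurd (congrArg Prod.fst h) (by norm_num)
      by_cases hv : v ≤ p - 1
      · have heq : Bstep p H v ((-(0:ℕ) : ℤ), (p : ℤ) - ((0:ℕ) : ℤ)) = ((v : ℤ), H, 0) := by
          simp only [Bstep, if_neg hne]
          norm_num [hv]
        rw [heq]
        refine ⟨hH, ⟨by omega, by push_cast; omega⟩, by push_cast; ring, ?_, ?_⟩
        · left; push_cast; omega
        · right; rfl
      · have hvp : p ≤ v := by omega
        have heq : Bstep p H v ((-(0:ℕ) : ℤ), (p : ℤ) - ((0:ℕ) : ℤ))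
            = ((p : ℤ), H, v - p) := by
          simp only [Bstep, if_neg hne]
          norm_num [hv]
        rw [heq]
        refine ⟨hH, ⟨by push_cast; omega, le_refl _⟩, by push_cast [hvp]; ring, ?_, ?_⟩
        · left; push_cast; omega
        · left; push_cast [hvp]; omega
    · -- a = (-j, p - j), 1 ≤ j ≤ p
      have hne : ((-(j:ℕ) : ℤ), (p : ℤ) - ((j:ℕ) : ℤ)) ≠ ((1 : ℤ), (-1 : ℤ)) := by
        intro h
        have h2 : (-(j:ℕ) : ℤ) = 1 := congrArg Prod.fst h
        omega
      have h1 : ((-(j:ℕ) : ℤ), (p : ℤ) - ((j:ℕ) : ℤ)).1 ≠ 0 := by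
        show (-(j:ℕ) : ℤ) ≠ 0
        omega
      have hm : (-((-(j:ℕ) : ℤ), (p : ℤ) - ((j:ℕ) : ℤ)).1 - 1).toNat = j - 1 := by
        show (-(-(j:ℕ) : ℤ) - 1).toNat = j - 1
        omega
      by_cases hv : v ≤ p - (j - 1) - 1
      · have heq : Bstep p H v ((-(j:ℕ) : ℤ), (p : ℤ) - ((j:ℕ) : ℤ))
            = (-1, (v, j - 1) :: H, 0) := by
          simp only [Bstep, if_neg hne, if_neg h1, hm, if_pos hv]
        rw [heq]
        refine ⟨hvalid_cons (by simp; omega) hH, ⟨le_refl _, by push_cast; omega⟩, ?_, ?_, ?_⟩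
        · rw [wtl_cons]; push_cast; ring
        · left; rw [wtm_cons]; push_cast; omega
        · right; rfl
      · have heq : Bstep p H v ((-(j:ℕ) : ℤ), (p : ℤ) - ((j:ℕ) : ℤ))
            = (-1, (p - (j - 1) - 1, j - 1) :: H, v - (p - (j - 1) - 1)) := by
          simp only [Bstep, if_neg hne, if_neg h1, hm, if_neg hv]
        rw [heq]
        refine ⟨hvalid_cons (by simp; omega) hH, ⟨le_refl _, by push_cast; omega⟩, ?_, ?_, ?_⟩
        · rw [wtl_cons]; push_cast; omega
        · left; rw [wtm_cons]; push_cast; omega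
        · left; push_cast; omega

lemma run_spec (p : ℕ) (u : List (ℤ × ℤ)) (hu : ∀ a ∈ u, InSp p a)
    (H₀ : List (ℕ × ℕ)) (v₀ : ℕ) (hH₀ : HValid p H₀) :
    HValid p (Run p u H₀ v₀).1 ∧
    (wtm (Run p u H₀ v₀).1 : ℤ) ≤ Dx u + (wtm H₀ : ℤ) ∧
    ((Run p u H₀ v₀).2.1 : ℤ) ≤ Dy u + (v₀ : ℤ) ∧
    ((Run p u H₀ v₀).2.2).sum + ((Run p u H₀ v₀).2.1 : ℤ) + (wtl (Run p u H₀ v₀).1 : ℤ)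
      = (v₀ : ℤ) + (wtl H₀ : ℤ) ∧
    SigmaWord p (Run p u H₀ v₀).2.2 ∧
    (Run p u H₀ v₀).2.2.length = u.length := by
  induction u with
  | nil =>
    refine ⟨hH₀, by simp [Run, Dx], by simp [Run, Dy], by simp [Run], ?_, by simp [Run]⟩
    intro a ha; simp [Run] at ha
  | cons a rest ih =>
    obtain ⟨ihH, ihm, ihv, ihs, ihS, ihl⟩ := ih (fun b hb => hu b (List.mem_cons_of_mem _ hb))
    have ha : InSp p a := hu a (List.mem_cons_self (a := a) (l := rest))
    obtain ⟨sH, ⟨sμ1, sμ2⟩, ssum, sm, sv⟩ :=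
      bstep_spec p ha ihH (Run p rest H₀ v₀).2.1
    simp only [Run]
    refine ⟨sH, ?_, ?_, ?_, ?_, ?_⟩
    · rcases sm with h | h
      · have := dx_nonneg rest
        calc (wtm (Bstep p (Run p rest H₀ v₀).1 (Run p rest H₀ v₀).2.1 a).2.1 : ℤ)
            ≤ (wtm (Run p rest H₀ v₀).1 : ℤ) - a.1 := h
          _ ≤ Dx rest + (wtm H₀ : ℤ) - a.1 := by linarith
          _ ≤ Dx (a :: rest) + (wtm H₀ : ℤ) := by
              simp only [Dx]; have := le_max_right (0:ℤ) (Dx rest - a.1); linarith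
      · rw [h]
        have h1 : (0:ℤ) ≤ Dx (a :: rest) := dx_nonneg _
        have h2 : (0:ℤ) ≤ (wtm H₀ : ℤ) := by positivity
        push_cast
        linarith
    · rcases sv with h | h
      · calc ((Bstep p (Run p rest H₀ v₀).1 (Run p rest H₀ v₀).2.1 a).2.2 : ℤ)
            ≤ ((Run p rest H₀ v₀).2.1 : ℤ) - a.2 := h
          _ ≤ Dy rest + (v₀ : ℤ) - a.2 := by linarith
          _ ≤ Dy (a :: rest) + (v₀ : ℤ) := by
              simp only [Dy]; have := le_max_right (0:ℤ) (Dy rest - a.2); linarith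
      · rw [h]
        have h1 : (0:ℤ) ≤ Dy (a :: rest) := dy_nonneg _
        have h2 : (0:ℤ) ≤ (v₀ : ℤ) := by positivity
        push_cast
        linarith
    · simp only [List.sum_cons]
      linarith
    · intro b hb
      rcases List.mem_cons.1 hb with rfl | hb
      · exact ⟨sμ1, sμ2⟩
      · exact ihS b hb
    · simp [ihl]

end PsiAux

open PsiAux in
theorem psi_maps_tandem_to_lukasiewicz (p : ℕ) (hp : 1 ≤ p)
    (wb : List (ℤ × ℤ)) (hwb : Tandem p wb) :
    Lukasiewicz p (Psi p wb) ∧ (Psi p wb).length = wb.length := by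
  obtain ⟨hmem, hpos⟩ := hwb
  have hH₀ : HValid p ([] : List (ℕ × ℕ)) := fun x hx => by simp at hx
  have hwtm0 : wtm ([] : List (ℕ × ℕ)) = 0 := rfl
  have hwtl0 : wtl ([] : List (ℕ × ℕ)) = 0 := rfl
  obtain ⟨fH, fm, fv, fsum, fS, flen⟩ := run_spec p wb hmem [] 0 hH₀
  rw [hwtm0] at fm
  rw [hwtl0] at fsum
  have hdx : Dx wb ≤ 0 := dx_le wb 0 (fun i => by simpa using (hpos i).1)
  have hdy : Dy wb ≤ 0 := dy_le wb 0 (fun i => by simpa using (hpos i).2)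
  have hwtm : wtm (Run p wb [] 0).1 = 0 := by omega
  have hHnil : (Run p wb [] 0).1 = [] := wtm_eq_zero hwtm
  have hvz : (Run p wb [] 0).2.1 = 0 := by omega
  rw [hHnil, hvz, hwtl0] at fsum
  have hPsi : Psi p wb = (Run p wb [] 0).2.2 := by
    simp [Psi, psiRun_eq_run]
  have hsum : (Psi p wb).sum = 0 := by
    rw [hPsi]; omega
  refine ⟨⟨?_, ?_, hsum⟩, ?_⟩
  · rw [hPsi]; exact fS
  · -- prefix sums nonnegative
    intro i
    rw [hPsi]
    by_cases hi : wb.length ≤ i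
    · rw [List.take_of_length_le (by omega)]
      omega
    · push_neg at hi
      obtain ⟨gH, -, -, -, -, glen⟩ :=
        run_spec p (wb.drop i) (fun b hb => hmem b (List.mem_of_mem_drop hb)) [] 0 hH₀
      obtain ⟨kH, km, kv, ksum, kS, klen⟩ :=
        run_spec p (wb.take i) (fun b hb => hmem b (List.mem_of_mem_take hb))
          (Run p (wb.drop i) [] 0).1 (Run p (wb.drop i) [] 0).2.1 gH
      have hsplit := run_append p (wb.take i) (wb.drop i) [] 0
      rw [List.take_append_drop] at hsplit
      have hH1 := hHnil
      rw [hsplit] at hH1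
      dsimp only at hH1
      have hv1 := hvz
      rw [hsplit] at hv1
      dsimp only at hv1
      rw [hH1, hv1, hwtl0] at ksum
      have hlen1 : (Run p (wb.take i) (Run p (wb.drop i) [] 0).1
          (Run p (wb.drop i) [] 0).2.1).2.2.length = i := by
        rw [klen, List.length_take]
        omega
      have htake : ((Run p wb [] 0).2.2).take i
          = (Run p (wb.take i) (Run p (wb.drop i) [] 0).1
              (Run p (wb.drop i) [] 0).2.1).2.2 := by
        rw [hsplit]
        dsimp only
        exact List.take_left' hlen1
      rw [htake]
      omega
  · rw [hPsi, flen]
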